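/- Separation condition for constrained zonotopes with affine input dependence (Theorem 2, abstract form): For i = 1, 2 let Y_i(u) = CZ(G_i, c_i + P_i u, A_i, b_i + Q_i u) ⊆ ℝ^p be constrained zonotopes whose centers and constraint vectors depend affinely on u ∈ ℝ^m, with P_i ∈ ℝ^{p×m} and Q_i ∈ ℝ^{n_{c_i}×m}. Then Y_1(u) ∩ Y_2(u) = ∅ if and only if the stacked vector [(P_2 − P_1)u; Q_1 u; Q_2 u] does NOT belong to the zonotope with generator matrix [(G_1, −G_2); (A_1, 0); (0, A_2)] and center [c_1 − c_2; −b_1; −b_2]. -/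

import Mathlib

/-!
A common point `c₁ + G₁ ξ₁ = c₂ + G₂ ξ₂` of two constrained zonotopes is the same thing as a
pair `(ξ₁, ξ₂)` in the unit box with `G₁ ξ₁ - G₂ ξ₂ = c₂ - c₁`, `A₁ ξ₁ = b₁` and `A₂ ξ₂ = b₂`,
i.e. a witness that `(c₂ - c₁, b₁, b₂)` lies in the zonotope centred at `0` generated by the
stacked matrix `[(G₁, -G₂); (A₁, 0); (0, A₂)]`. The input `u` only shifts `cᵢ` by `Pᵢ u` and
`bᵢ` by `Qᵢ u`; moving the centre `(c₁ - c₂, -b₁, -b₂)` to the other side gives the stated form.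
-/

open Matrix

/-- The constrained zonotope `CZ(G,c,A,b) = {c + Gξ : ‖ξ‖_∞ ≤ 1, Aξ = b}`. -/
def CZ {n ng nc : Type*} [Fintype ng]
    (G : Matrix n ng ℝ) (c : n → ℝ) (A : Matrix nc ng ℝ) (b : nc → ℝ) : Set (n → ℝ) :=
  {x | ∃ ξ : ng → ℝ, (∀ i, |ξ i| ≤ 1) ∧ A *ᵥ ξ = b ∧ x = c + G *ᵥ ξ}

section ConstrainedZonotope

variable {n ng nc : Type*} [Fintype ng] {G : Matrix n ng ℝ} {c : n → ℝ} {A : Matrix nc ng ℝ}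
  {b : nc → ℝ} {x : n → ℝ}

theorem mem_CZ_iff_sub_mem_CZ_zero : x ∈ CZ G c A b ↔ x - c ∈ CZ G 0 A b := by
  simp only [CZ, Set.mem_ofPred_eq, zero_add, sub_eq_iff_eq_add']

theorem mem_CZ_iff_of_isEmpty [IsEmpty nc] :
    x ∈ CZ G c A b ↔ ∃ ξ : ng → ℝ, (∀ i, |ξ i| ≤ 1) ∧ x = c + G *ᵥ ξ := by
  simp only [CZ, Set.mem_ofPred_eq, Subsingleton.elim (A *ᵥ _) b, true_and]

end ConstrainedZonotope

theorem fromRows_fromCols_fromBlocks_mulVec_sumElim {R p g₁ g₂ m₁ m₂ : Type*} [Ring R]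
    [Fintype g₁] [Fintype g₂] (G₁ : Matrix p g₁ R) (G₂ : Matrix p g₂ R) (A₁ : Matrix m₁ g₁ R)
    (A₂ : Matrix m₂ g₂ R) (v₁ : g₁ → R) (v₂ : g₂ → R) :
    fromRows (fromCols G₁ (-G₂)) (fromBlocks A₁ 0 0 A₂) *ᵥ Sum.elim v₁ v₂ =
      Sum.elim (G₁ *ᵥ v₁ - G₂ *ᵥ v₂) (Sum.elim (A₁ *ᵥ v₁) (A₂ *ᵥ v₂)) := by
  simp [fromRows_mulVec, fromBlocks_mulVec, neg_mulVec, sub_eq_add_neg]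

theorem CZ_inter_CZ_nonempty_iff {p g₁ m₁ g₂ m₂ m : Type*} [Fintype g₁] [Fintype g₂] [IsEmpty m]
    (G₁ : Matrix p g₁ ℝ) (c₁ : p → ℝ) (A₁ : Matrix m₁ g₁ ℝ) (b₁ : m₁ → ℝ)
    (G₂ : Matrix p g₂ ℝ) (c₂ : p → ℝ) (A₂ : Matrix m₂ g₂ ℝ) (b₂ : m₂ → ℝ)
    (A : Matrix m (g₁ ⊕ g₂) ℝ) (b : m → ℝ) :
    (CZ G₁ c₁ A₁ b₁ ∩ CZ G₂ c₂ A₂ b₂).Nonempty ↔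
      Sum.elim (c₂ - c₁) (Sum.elim b₁ b₂) ∈
        CZ (fromRows (fromCols G₁ (-G₂)) (fromBlocks A₁ 0 0 A₂)) 0 A b := by
  rw [mem_CZ_iff_of_isEmpty]
  simp only [Set.Nonempty, CZ, Set.mem_inter_iff, Set.mem_ofPred_eq, zero_add]
  constructor
  · rintro ⟨x, ⟨ξ₁, h₁, hA₁, rfl⟩, ξ₂, h₂, hA₂, hx⟩
    refine ⟨Sum.elim ξ₁ ξ₂, Sum.forall.2 ⟨h₁, h₂⟩, ?_⟩
    rw [fromRows_fromCols_fromBlocks_mulVec_sumElim, hA₁, hA₂]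
    congr 1
    rw [sub_eq_sub_iff_add_eq_add, ← hx, add_comm]
  · rintro ⟨ξ, hξ, hv⟩
    rw [← Sum.elim_comp_inl_inr ξ, fromRows_fromCols_fromBlocks_mulVec_sumElim, Sum.elim_eq_iff,
      Sum.elim_eq_iff, sub_eq_sub_iff_add_eq_add] at hv
    obtain ⟨hc, hA₁, hA₂⟩ := hv
    refine ⟨_, ⟨ξ ∘ Sum.inl, fun _ => hξ _, hA₁.symm, rfl⟩, ξ ∘ Sum.inr, fun _ => hξ _, hA₂.symm, ?_⟩
    rw [add_comm, hc, add_comm]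

/-- Separation condition for constrained zonotopes with affine input dependence
(Theorem 2, abstract form): `Y_1(u) ∩ Y_2(u) = ∅` iff `[(P_2 − P_1)u; Q_1 u; Q_2 u]`
does not belong to the zonotope with generator matrix `[(G_1,−G_2);(A_1,0);(0,A_2)]`
and center `[c_1 − c_2; −b_1; −b_2]`. -/
theorem cz_separation_iff {p m g1 nc1 g2 nc2 : Type*}
    [Fintype m] [Fintype g1] [Fintype g2]
    (G1 : Matrix p g1 ℝ) (c1 : p → ℝ) (A1 : Matrix nc1 g1 ℝ) (b1 : nc1 → ℝ)
    (P1 : Matrix p m ℝ) (Q1 : Matrix nc1 m ℝ)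
    (G2 : Matrix p g2 ℝ) (c2 : p → ℝ) (A2 : Matrix nc2 g2 ℝ) (b2 : nc2 → ℝ)
    (P2 : Matrix p m ℝ) (Q2 : Matrix nc2 m ℝ)
    (u : m → ℝ) :
    CZ G1 (c1 + P1 *ᵥ u) A1 (b1 + Q1 *ᵥ u)
        ∩ CZ G2 (c2 + P2 *ᵥ u) A2 (b2 + Q2 *ᵥ u) = ∅ ↔
      Sum.elim ((P2 - P1) *ᵥ u) (Sum.elim (Q1 *ᵥ u) (Q2 *ᵥ u)) ∉
        CZ (fromRows (fromCols G1 (-G2)) (fromBlocks A1 0 0 A2))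
           (Sum.elim (c1 - c2) (Sum.elim (-b1) (-b2)))
           (0 : Matrix (Fin 0) (g1 ⊕ g2) ℝ) (0 : Fin 0 → ℝ) := by
  have hshift : Sum.elim ((P2 - P1) *ᵥ u) (Sum.elim (Q1 *ᵥ u) (Q2 *ᵥ u))
      - Sum.elim (c1 - c2) (Sum.elim (-b1) (-b2)) =
      Sum.elim ((c2 + P2 *ᵥ u) - (c1 + P1 *ᵥ u)) (Sum.elim (b1 + Q1 *ᵥ u) (b2 + Q2 *ᵥ u)) := by
    ext (i | i | i) <;> simp only [sub_mulVec, Pi.sub_apply, Pi.add_apply, Pi.neg_apply,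
      Sum.elim_inl, Sum.elim_inr] <;> ring
  rw [← Set.not_nonempty_iff_eq_empty, not_iff_not, mem_CZ_iff_sub_mem_CZ_zero, hshift]
  exact CZ_inter_CZ_nonempty_iff ..
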